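/- arXiv:2405.08579 — 2 statements merged into one kernel-verified Lean document; each statement's English description precedes it below -/
import Mathlib

section
/- Let M be an invertible d×d matrix over K whose entries are rational functions of u_0, u_1, λ only, and suppose that for all i, j ∈ {1,…,N} one has ∂/∂u^i_0 ( ∂M/∂u^j_1 · M^{-1} ) = 0. Let a_0 ∈ ℂ^N be such that M(a_0,u_1,λ) is well defined and invertible, and set g := S^{-1}( M(a_0,u_1,λ)^{-1} ). Then the matrix M̂ := S(g)·M·g^{-1} = M(a_0,u_1,λ)^{-1} · M(u_0,u_1,λ) · M(a_0,u_0,λ) has entries that are rational functions of u_0 and λ only (independent of u_1). -/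
/-!
Setup: `KK N` is the field of rational functions over `ℂ` in the commuting
variables `λ` (here `lam N`) and `u^γ_ℓ` (here `uu N γ ℓ`, `γ : Fin N`, `ℓ : ℤ`),
realized as the fraction field of the multivariate polynomial ring.
`SS N` is the shift automorphism `S` (fixing `ℂ` and `λ`, sending `u^γ_ℓ` to
`u^γ_{ℓ+1}`), and `Sz N ℓ = S^ℓ`.
-/

set_option maxHeartbeats 1000000

noncomputable section

open MvPolynomial

abbrev RR (N : ℕ) : Type := MvPolynomial (Option (Fin N × ℤ)) ℂ
abbrev KK (N : ℕ) : Type := FractionRing (RR N)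

def lam (N : ℕ) : KK N := algebraMap (RR N) (KK N) (X none)
def uu (N : ℕ) (γ : Fin N) (ℓ : ℤ) : KK N := algebraMap (RR N) (KK N) (X (some (γ, ℓ)))

def shiftIdx (N : ℕ) : Option (Fin N × ℤ) ≃ Option (Fin N × ℤ) :=
  Equiv.optionCongr ((Equiv.refl (Fin N)).prodCongr (Equiv.addRight (1:ℤ)))

/-- The shift on polynomials: `λ ↦ λ`, `u^γ_ℓ ↦ u^γ_{ℓ+1}`. -/
def shiftR (N : ℕ) : RR N ≃+* RR N := (renameEquiv ℂ (shiftIdx N)).toRingEquiv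

/-- The shift automorphism `S` of the field `KK N`. -/
def SS (N : ℕ) : RingAut (KK N) := IsFractionRing.ringEquivOfRingEquiv (shiftR N)

/-- `Sz N ℓ = S^ℓ`. -/
def Sz (N : ℕ) (ℓ : ℤ) : KK N ≃+* KK N := SS N ^ ℓ

/-- The subfield of elements that are rational functions of `λ` and the
variables `u^γ_ℓ` with `ℓ ∈ s` only. -/
def depOn (N : ℕ) (s : Set ℤ) : Subfield (KK N) :=
  Subfield.closure (Set.range (algebraMap ℂ (KK N)) ∪ {lam N} ∪
    {x | ∃ γ : Fin N, ∃ ℓ ∈ s, x = uu N γ ℓ})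

/-- The substitution `u^γ_0 := a0 γ` on polynomials (fixing `λ` and all other
variables). -/
def evalAt (N : ℕ) (a0 : Fin N → ℂ) : RR N →+* RR N :=
  (aeval (fun i : Option (Fin N × ℤ) =>
    match i with
    | none => (X none : RR N)
    | some (γ, ℓ) => if ℓ = 0 then C (a0 γ) else X (some (γ, ℓ)))).toRingHom

/-- `SubstAt N a0 x y` means: the rational function `x` is well defined at
`u_0 = a0` (it has a representation `x = p/q` with `q` not vanishing identically
after the substitution `u_0 := a0`) and its value there is the rational
function `y` of the remaining variables. -/
def SubstAt (N : ℕ) (a0 : Fin N → ℂ) (x y : KK N) : Prop :=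
  ∃ p q : RR N, evalAt N a0 q ≠ 0 ∧
    x * algebraMap (RR N) (KK N) q = algebraMap (RR N) (KK N) p ∧
    y * algebraMap (RR N) (KK N) (evalAt N a0 q) = algebraMap (RR N) (KK N) (evalAt N a0 p)

/-!
Write `∂_j = ∂/∂u^j_1` and `B_j = ∂_j M · M⁻¹`. The hypothesis says that `B_j` does not involve
`u_0`, so substituting `u_0 = a_0` in `∂_j M = B_j M` gives `∂_j Ma = B_j Ma`, whence
`∂_j (Ma⁻¹ M) = 0`. Since `S⁻¹(Ma)` involves only `u_0` and `λ`, every `∂_j` kills `M̂`.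
A rational function of `u_0, u_1, λ` killed by every `∂_j` does not involve `u_1`: for a reduced
fraction `p / q` the quotient rule gives `p ∣ ∂_j p` and `q ∣ ∂_j q`, which forces
`∂_j p = ∂_j q = 0`.
-/

namespace Polynomial

theorem derivative_eq_zero_of_dvd_derivative {R : Type*} [CommRing R] [IsDomain R]
    {f : R[X]} (h : f ∣ derivative f) : derivative f = 0 := by
  by_contra hne
  by_cases h0 : f.natDegree = 0
  · exact hne (derivative_of_natDegree_zero h0)
  · exact (natDegree_le_of_dvd h hne).not_gt (natDegree_derivative_lt h0)

end Polynomial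

namespace MvPolynomial

section CommSemiring

variable {R σ A S : Type*} [CommSemiring R]

theorem apply_mem_of_mem_supported [Semiring A] [SetLike S A] [SubsemiringClass S A]
    (f : MvPolynomial σ R →+* A) (T : S) {s : Set σ} (hC : ∀ a, f (C a) ∈ T)
    (hX : ∀ i ∈ s, f (X i) ∈ T) {p : MvPolynomial σ R} (hp : p ∈ supported R s) : f p ∈ T := by
  rw [supported_eq_adjoin_X] at hp
  induction hp using Algebra.adjoin_induction with
  | mem x hx => obtain ⟨i, hi, rfl⟩ := hx; exact hX i hi
  | algebraMap a => exact hC a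
  | add x y _ _ hx hy => rw [map_add]; exact add_mem hx hy
  | mul x y _ _ hx hy => rw [map_mul]; exact mul_mem hx hy

theorem pderiv_mem_supported {s : Set σ} {p : MvPolynomial σ R} (a : σ)
    (hp : p ∈ supported R s) : pderiv a p ∈ supported R s := by
  classical
  by_cases ha : a ∈ s
  · rw [supported_eq_range_rename, AlgHom.mem_range] at hp ⊢
    obtain ⟨p, rfl⟩ := hp
    refine ⟨pderiv ⟨a, ha⟩ p, ?_⟩
    exact (pderiv_rename (f := Subtype.val) Subtype.val_injective ⟨a, ha⟩ p).symm
  · have : pderiv a p = 0 := pderiv_eq_zero_of_notMem_vars fun h => ha (mem_supported.mp hp h)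
    rw [this]
    exact zero_mem _

end CommSemiring

section CommRing

variable {R σ : Type*} [CommRing R]

theorem optionEquivLeft_pderiv_none (p : MvPolynomial (Option σ) R) :
    optionEquivLeft R σ (pderiv none p) = Polynomial.derivative (optionEquivLeft R σ p) := by
  induction p using MvPolynomial.induction_on with
  | C a => simp [optionEquivLeft_C]
  | add p q hp hq => simp only [map_add, hp, hq]
  | mul_X p n ih =>
    cases n <;> simp [Derivation.leibniz, optionEquivLeft_X_none, optionEquivLeft_X_some, ih,
      Polynomial.derivative_mul] <;> ring

theorem optionEquivLeft_rename_pderiv [DecidableEq σ] (a : σ) (p : MvPolynomial σ R) :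
    optionEquivLeft R {b // b ≠ a} (rename (Equiv.optionSubtypeNe a).symm (pderiv a p)) =
      Polynomial.derivative
        (optionEquivLeft R {b // b ≠ a} (rename (Equiv.optionSubtypeNe a).symm p)) := by
  rw [← pderiv_rename (Equiv.injective _), Equiv.optionSubtypeNe_symm_self,
    optionEquivLeft_pderiv_none]

variable [IsDomain R]

theorem notMem_vars_of_pderiv_eq_zero [CharZero R] {a : σ} {p : MvPolynomial σ R}
    (h : pderiv a p = 0) : a ∉ p.vars := by
  classical
  rw [mem_vars_iff_degreeOf_ne_zero, not_not, degreeOf_eq_natDegree]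
  apply Polynomial.derivative_eq_zero.mp
  rw [← optionEquivLeft_rename_pderiv, h, map_zero, map_zero]

theorem pderiv_eq_zero_of_dvd_pderiv {a : σ} {p : MvPolynomial σ R}
    (h : p ∣ pderiv a p) : pderiv a p = 0 := by
  classical
  set e := (renameEquiv R (Equiv.optionSubtypeNe a).symm).trans
    (optionEquivLeft R {b // b ≠ a})
  have he : ∀ q, e (pderiv a q) = Polynomial.derivative (e q) :=
    optionEquivLeft_rename_pderiv a
  apply e.injective
  rw [map_zero, he]
  exact Polynomial.derivative_eq_zero_of_dvd_derivative (by simpa [he] using map_dvd e h)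

theorem mem_supported_of_dvd {s : Set σ} {p q : MvPolynomial σ R} (hpq : p ∣ q) (hq : q ≠ 0)
    (hqs : q ∈ supported R s) : p ∈ supported R s := by
  obtain ⟨c, rfl⟩ := hpq
  rw [mem_supported] at hqs ⊢
  intro a ha
  apply hqs
  rw [Finset.mem_coe, mem_vars_iff_degreeOf_ne_zero] at ha ⊢
  rw [degreeOf_mul_eq (left_ne_zero_of_mul hq) (right_ne_zero_of_mul hq)]
  omega

end CommRing

theorem pderiv_eq_zero_of_isRelPrime {R σ : Type*} [Field R] {a : σ} {p q : MvPolynomial σ R}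
    (hpq : IsRelPrime p q) (h : pderiv a p * q = p * pderiv a q) :
    pderiv a p = 0 ∧ pderiv a q = 0 :=
  ⟨pderiv_eq_zero_of_dvd_pderiv (hpq.dvd_of_dvd_mul_right ⟨_, h⟩),
    pderiv_eq_zero_of_dvd_pderiv
      (hpq.symm.dvd_of_dvd_mul_right ⟨pderiv a p, by linear_combination -h⟩)⟩

end MvPolynomial

theorem Derivation.apply_algebraMap_eq_pderiv {R σ K : Type*} [CommRing R] [CommRing K]
    [Algebra R K] [Algebra (MvPolynomial σ R) K] [IsScalarTower R (MvPolynomial σ R) K]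
    (D : Derivation R K K) (a : σ)
    (hD : ∀ b, D (algebraMap _ K (X b : MvPolynomial σ R)) =
      algebraMap _ K (pderiv a (X b : MvPolynomial σ R)))
    (p : MvPolynomial σ R) : D (algebraMap _ K p) = algebraMap _ K (pderiv a p) :=
  congrArg (· p) (derivation_ext (D₁ := D.compAlgebraMap (MvPolynomial σ R))
    (D₂ := (Algebra.linearMap (MvPolynomial σ R) K).compDer (pderiv a)) hD)

namespace Matrix

variable {n : Type*}

theorem mul_apply_mem {R S : Type*} [CommSemiring R] [SetLike S R] [SubsemiringClass S R]
    [Fintype n] {l m : Type*} (F : S) {A : Matrix l n R} {B : Matrix n m R}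
    (hA : ∀ i j, A i j ∈ F) (hB : ∀ i j, B i j ∈ F) (i : l) (j : m) : (A * B) i j ∈ F :=
  sum_mem fun k _ => mul_mem (hA i k) (hB k j)

theorem map_derivation_mul {R K : Type*} [CommSemiring R] [CommRing K] [Algebra R K] [Fintype n]
    (D : Derivation R K K) {l m : Type*}
    (A : Matrix l n K) (B : Matrix n m K) : (A * B).map D = A.map D * B + A * B.map D := by
  ext i j
  simp only [map_apply, add_apply, mul_apply, map_sum, Derivation.leibniz, smul_eq_mul,
    ← Finset.sum_add_distrib]
  exact Finset.sum_congr rfl fun k _ => by ring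

variable [Fintype n] [DecidableEq n]

theorem map_inv_of_field {K L F : Type*} [Field K] [Field L] [FunLike F K L]
    [RingHomClass F K L] (f : F) (A : Matrix n n K) : A⁻¹.map f = (A.map f)⁻¹ := by
  have hdet : (A.map f).det = f A.det := ((f : K →+* L).map_det A).symm
  have hadj : (A.map f).adjugate = A.adjugate.map f := ((f : K →+* L).map_adjugate A).symm
  rw [inv_def, inv_def, hdet, hadj, Ring.inverse_eq_inv', Ring.inverse_eq_inv', ← map_inv₀]
  ext i j
  simp

theorem inv_apply_mem {K : Type*} [Field K] (F : Subfield K) {A : Matrix n n K}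
    (hA : ∀ i j, A i j ∈ F) (i j : n) : A⁻¹ i j ∈ F := by
  set A' : Matrix n n F := fun i j => ⟨A i j, hA i j⟩
  have : A = A'.map F.subtype := rfl
  rw [this, ← map_inv_of_field]
  exact (A'⁻¹ i j).2

theorem map_derivation_inv_mul_eq_zero {R K : Type*} [CommSemiring R] [Field K] [Algebra R K]
    (D : Derivation R K K)
    {A B M : Matrix n n K} (hA : IsUnit A.det) (hDA : A.map D = B * A) (hDM : M.map D = B * M) :
    (A⁻¹ * M).map D = 0 := by
  have hD1 : (1 : Matrix n n K).map D = 0 := by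
    ext i j
    by_cases h : i = j <;> simp [h]
  have h1 : A⁻¹.map D * A = -(A⁻¹ * B * A) := by
    have := map_derivation_mul D A⁻¹ A
    rw [nonsing_inv_mul A hA, hD1, hDA] at this
    rw [eq_neg_iff_add_eq_zero, this, Matrix.mul_assoc]
  have h2 : A⁻¹.map D = -(A⁻¹ * B) := by
    simpa [Matrix.mul_assoc, mul_nonsing_inv A hA] using congrArg (· * A⁻¹) h1
  rw [map_derivation_mul, h2, hDM, Matrix.neg_mul, Matrix.mul_assoc, neg_add_cancel]

end Matrix

local notation "ι" => algebraMap (RR _) (KK _)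

/-- The variables allowed in `depOn N s`: `λ` (that is, `none`) and the `u^γ_ℓ` with `ℓ ∈ s`. -/
def depVars (N : ℕ) (s : Set ℤ) : Set (Option (Fin N × ℤ)) := {v | ∀ x ∈ v, x.2 ∈ s}

variable {N : ℕ}

theorem algebraMap_ne_zero {p : RR N} (hp : p ≠ 0) : (ι p : KK N) ≠ 0 := by
  simpa using hp

theorem algebraMap_mem_depOn {s : Set ℤ} {p : RR N} (hp : p ∈ supported ℂ (depVars N s)) :
    (ι p : KK N) ∈ depOn N s := by
  refine apply_mem_of_mem_supported _ _ (fun a => ?_) ?_ hp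
  · rw [← algebraMap_eq, ← IsScalarTower.algebraMap_apply]
    exact Subfield.subset_closure (Or.inl (Or.inl ⟨a, rfl⟩))
  · rintro (_ | ⟨γ, ℓ⟩) hv
    · exact Subfield.subset_closure (Or.inl (Or.inr rfl))
    · exact Subfield.subset_closure (Or.inr ⟨γ, ℓ, hv _ rfl, rfl⟩)

theorem mem_depOn_iff {s : Set ℤ} {x : KK N} :
    x ∈ depOn N s ↔ ∃ p q : RR N, q ≠ 0 ∧ p ∈ supported ℂ (depVars N s) ∧
      q ∈ supported ℂ (depVars N s) ∧ x * ι q = ι p := by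
  constructor
  · intro hx
    obtain ⟨y, hy, z, hz, rfl⟩ := Subfield.mem_closure_iff.mp hx
    have hle : Subring.closure (Set.range (algebraMap ℂ (KK N)) ∪ {lam N} ∪
        {x | ∃ γ : Fin N, ∃ ℓ ∈ s, x = uu N γ ℓ}) ≤
        ((supported ℂ (depVars N s)).map (IsScalarTower.toAlgHom ℂ (RR N) (KK N))).toSubring := by
      rw [Subring.closure_le]
      rintro _ ((⟨a, rfl⟩ | rfl) | ⟨γ, ℓ, hℓ, rfl⟩)
      · exact ⟨C a, Subalgebra.algebraMap_mem _ a, (IsScalarTower.algebraMap_apply ..).symm⟩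
      · exact ⟨X none, X_mem_supported.mpr (by simp [depVars]), rfl⟩
      · exact ⟨X (some (γ, ℓ)), X_mem_supported.mpr (by simpa [depVars]), rfl⟩
    obtain ⟨p, hp, rfl⟩ := hle hy
    obtain ⟨q, hq, rfl⟩ := hle hz
    by_cases hq0 : q = 0
    · exact ⟨0, 1, one_ne_zero, zero_mem _, one_mem _, by simp [hq0]⟩
    · exact ⟨p, q, hq0, hp, hq, div_mul_cancel₀ _ (algebraMap_ne_zero hq0)⟩
  · rintro ⟨p, q, hq0, hp, hq, hx⟩
    rw [eq_div_of_mul_eq (algebraMap_ne_zero hq0) hx]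
    exact div_mem (algebraMap_mem_depOn hp) (algebraMap_mem_depOn hq)

theorem exists_isRelPrime_of_mem_depOn {s : Set ℤ} {x : KK N} (hx : x ∈ depOn N s) :
    ∃ p q : RR N, q ≠ 0 ∧ IsRelPrime p q ∧ p ∈ supported ℂ (depVars N s) ∧
      q ∈ supported ℂ (depVars N s) ∧ x * ι q = ι p := by
  obtain ⟨p, q, hq0, hp, hq, hx⟩ := mem_depOn_iff.mp hx
  obtain ⟨p', q', c, hrel, rfl, rfl⟩ := UniqueFactorizationMonoid.exists_reduced_factors' p q hq0
  have hc : (ι c : KK N) ≠ 0 := algebraMap_ne_zero (left_ne_zero_of_mul hq0)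
  refine ⟨p', q', right_ne_zero_of_mul hq0, hrel, ?_,
    mem_supported_of_dvd (dvd_mul_left q' c) hq0 hq, ?_⟩
  · by_cases hp' : p' = 0
    · exact hp' ▸ zero_mem _
    · exact mem_supported_of_dvd (dvd_mul_left p' c) (mul_ne_zero (by simpa using hc) hp') hp
  · rw [map_mul, map_mul] at hx
    exact mul_left_cancel₀ hc (by linear_combination hx)

theorem depOn_mono {s t : Set ℤ} (h : s ⊆ t) : depOn N s ≤ depOn N t :=
  Subfield.closure_mono (Set.union_subset_union_right _ fun _ ⟨γ, ℓ, hℓ, hx⟩ => ⟨γ, ℓ, h hℓ, hx⟩)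

theorem derivation_algebraMap_eq_pderiv {D : Derivation ℂ (KK N) (KK N)} {i : Fin N} {ℓ : ℤ}
    (hlam : D (lam N) = 0) (hu : ∀ γ m, D (uu N γ m) = if γ = i ∧ m = ℓ then 1 else 0)
    (p : RR N) : D (ι p) = ι (pderiv (some (i, ℓ)) p) := by
  refine D.apply_algebraMap_eq_pderiv _ (fun
    | none => by rw [pderiv_X_of_ne (by simp), map_zero]; exact hlam
    | some (γ, m) => by
      rw [← uu, hu, pderiv_X, Pi.single_apply]
      split_ifs <;> simp_all) p

section Derivation

variable {D : Derivation ℂ (KK N) (KK N)} {v : Option (Fin N × ℤ)}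

theorem derivation_quotient_rule (hD : ∀ p : RR N, D (ι p) = ι (pderiv v p)) {x : KK N}
    {p q : RR N} (hx : x * ι q = ι p) :
    D x * ι (q * q) = ι (pderiv v p * q - p * pderiv v q) := by
  have h := congrArg D hx
  rw [Derivation.leibniz, hD, hD, smul_eq_mul, smul_eq_mul] at h
  rw [map_mul, map_sub, map_mul, map_mul]
  linear_combination (ι q : KK N) * h - (ι (pderiv v q) : KK N) * hx

theorem derivation_eq_zero_of_mem_depOn (hD : ∀ p : RR N, D (ι p) = ι (pderiv v p))
    {s : Set ℤ} (hv : v ∉ depVars N s) {x : KK N} (hx : x ∈ depOn N s) : D x = 0 := by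
  obtain ⟨p, q, hq0, hp, hq, hxq⟩ := mem_depOn_iff.mp hx
  have h := derivation_quotient_rule hD hxq
  rw [pderiv_eq_zero_of_notMem_vars fun h => hv (mem_supported.mp hp h),
    pderiv_eq_zero_of_notMem_vars fun h => hv (mem_supported.mp hq h)] at h
  simpa [hq0] using h

theorem derivation_mem_depOn (hD : ∀ p : RR N, D (ι p) = ι (pderiv v p)) {s : Set ℤ}
    {x : KK N} (hx : x ∈ depOn N s) : D x ∈ depOn N s := by
  obtain ⟨p, q, hq0, hp, hq, hxq⟩ := mem_depOn_iff.mp hx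
  refine mem_depOn_iff.mpr ⟨_, q * q, mul_ne_zero hq0 hq0, ?_, mul_mem hq hq,
    derivation_quotient_rule hD hxq⟩
  exact sub_mem (mul_mem (pderiv_mem_supported v hp) hq) (mul_mem hp (pderiv_mem_supported v hq))

end Derivation

theorem mem_supported_depVars_sdiff {s : Set ℤ} {ℓ : ℤ} {p : RR N}
    (hp : p ∈ supported ℂ (depVars N s)) (h : ∀ j, pderiv (some (j, ℓ)) p = 0) :
    p ∈ supported ℂ (depVars N (s \ {ℓ})) := by
  rw [mem_supported] at hp ⊢
  rintro (_ | ⟨j, m⟩) hv x hx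
  · cases hx
  cases hx
  refine ⟨hp hv _ rfl, fun hm => notMem_vars_of_pderiv_eq_zero (h j) ?_⟩
  rwa [← Set.mem_singleton_iff.mp hm]

theorem mem_depOn_sdiff_of_derivation_eq_zero {D : Fin N → Derivation ℂ (KK N) (KK N)} {ℓ : ℤ}
    (hD : ∀ j (p : RR N), D j (ι p) = ι (pderiv (some (j, ℓ)) p)) {s : Set ℤ} {x : KK N}
    (hx : x ∈ depOn N s) (h : ∀ j, D j x = 0) : x ∈ depOn N (s \ {ℓ}) := by
  obtain ⟨p, q, hq0, hrel, hp, hq, hxq⟩ := exists_isRelPrime_of_mem_depOn hx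
  have hpq : ∀ j, pderiv (some (j, ℓ)) p = 0 ∧ pderiv (some (j, ℓ)) q = 0 := by
    intro j
    have := derivation_quotient_rule (hD j) hxq
    rw [h j, zero_mul, eq_comm, map_eq_zero_iff _ (IsFractionRing.injective _ _),
      sub_eq_zero] at this
    exact pderiv_eq_zero_of_isRelPrime hrel this
  exact mem_depOn_iff.mpr ⟨p, q, hq0, mem_supported_depVars_sdiff hp fun j => (hpq j).1,
    mem_supported_depVars_sdiff hq fun j => (hpq j).2, hxq⟩

theorem Sz_neg_one_algebraMap (p : RR N) :
    Sz N (-1) (ι p) = ι (rename (shiftIdx N).symm p) := by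
  apply (SS N).injective
  have : SS N (Sz N (-1) (ι p)) = ι p := by
    rw [Sz, zpow_neg_one]
    exact (SS N).apply_symm_apply _
  rw [this, SS, IsFractionRing.ringEquivOfRingEquiv_algebraMap]
  congr 1
  exact ((renameEquiv ℂ (shiftIdx N)).apply_symm_apply p).symm

theorem Sz_one_Sz_neg_one (x : KK N) : Sz N 1 (Sz N (-1) x) = x := by
  rw [Sz, Sz, zpow_one, zpow_neg_one]
  exact (SS N).apply_symm_apply x

theorem Sz_neg_one_mem_depOn {s : Set ℤ} {x : KK N} (hx : x ∈ depOn N s) :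
    Sz N (-1) x ∈ depOn N ((· + 1) ⁻¹' s) := by
  have hle : depOn N s ≤ (depOn N ((· + 1) ⁻¹' s)).comap (Sz N (-1) : KK N →+* KK N) := by
    refine Subfield.closure_le.mpr ?_
    rintro _ ((⟨a, rfl⟩ | rfl) | ⟨γ, ℓ, hℓ, rfl⟩) <;> simp only [Subfield.coe_comap,
      Set.mem_preimage, RingHom.coe_coe]
    · rw [IsScalarTower.algebraMap_apply ℂ (RR N), Sz_neg_one_algebraMap, AlgHom.commutes,
        ← IsScalarTower.algebraMap_apply]
      exact Subfield.subset_closure (Or.inl (Or.inl ⟨a, rfl⟩))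
    · rw [lam, Sz_neg_one_algebraMap, rename_X]
      exact Subfield.subset_closure (Or.inl (Or.inr rfl))
    · rw [uu, Sz_neg_one_algebraMap, rename_X]
      exact Subfield.subset_closure (Or.inr ⟨γ, ℓ - 1, by simpa using hℓ, rfl⟩)
  exact hle hx

section Evaluation

variable (a0 : Fin N → ℂ)

@[simp] theorem evalAt_C (a : ℂ) : evalAt N a0 (C a) = C a := by
  simp [evalAt]

@[simp] theorem evalAt_X_none : evalAt N a0 (X none) = X none := by
  simp [evalAt]

@[simp] theorem evalAt_X_some (γ : Fin N) (ℓ : ℤ) :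
    evalAt N a0 (X (some (γ, ℓ))) = if ℓ = 0 then C (a0 γ) else X (some (γ, ℓ)) := by
  simp [evalAt]

theorem evalAt_mem_supported {s : Set ℤ} {p : RR N} (hp : p ∈ supported ℂ (depVars N s)) :
    evalAt N a0 p ∈ supported ℂ (depVars N (s \ {0})) := by
  refine apply_mem_of_mem_supported _ _ (fun a => ?_) ?_ hp
  · rw [evalAt_C]
    exact Subalgebra.algebraMap_mem (supported ℂ (depVars N (s \ {0}))) a
  · rintro (_ | ⟨γ, ℓ⟩) hv
    · rw [evalAt_X_none]
      exact X_mem_supported.mpr (by simp [depVars])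
    · rw [evalAt_X_some]
      split_ifs with hℓ
      · exact Subalgebra.algebraMap_mem (supported ℂ (depVars N (s \ {0}))) (a0 γ)
      · exact X_mem_supported.mpr (by simpa [depVars, hℓ] using hv)

theorem evalAt_eq_self {s : Set ℤ} (hs : 0 ∉ s) {p : RR N}
    (hp : p ∈ supported ℂ (depVars N s)) : evalAt N a0 p = p := by
  refine apply_mem_of_mem_supported (RingHom.id _) (RingHom.eqLocus (evalAt N a0) (RingHom.id _))
    (fun a => ?_) ?_ hp
  · exact evalAt_C a0 a
  · rintro (_ | ⟨γ, ℓ⟩) hv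
    · exact evalAt_X_none a0
    · have hℓ : ℓ ≠ 0 := fun h => hs (h ▸ hv _ rfl)
      exact (evalAt_X_some a0 γ ℓ).trans (if_neg hℓ)

theorem evalAt_pderiv {v : Option (Fin N × ℤ)} (hv : ∀ γ, v ≠ some (γ, 0)) (p : RR N) :
    evalAt N a0 (pderiv v p) = pderiv v (evalAt N a0 p) := by
  induction p using MvPolynomial.induction_on with
  | C a => simp
  | add p q hp hq => simp only [map_add, hp, hq]
  | mul_X p w ih =>
    simp only [Derivation.leibniz, map_add, map_mul, smul_eq_mul, ih]
    congr 2
    rcases w with _ | ⟨γ, ℓ⟩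
    · simp only [evalAt_X_none, pderiv_X, Pi.single_apply]
      split_ifs <;> simp
    · by_cases hℓ : ℓ = 0
      · subst hℓ
        simp [pderiv_X, (hv γ).symm]
      · simp only [evalAt_X_some, if_neg hℓ, pderiv_X, Pi.single_apply]
        split_ifs <;> simp

end Evaluation

namespace SubstAt

variable {a0 : Fin N → ℂ}

theorem unique {x y y' : KK N} (h : SubstAt N a0 x y) (h' : SubstAt N a0 x y') : y = y' := by
  obtain ⟨p, q, hq, hxq, hyq⟩ := h
  obtain ⟨p', q', hq', hxq', hyq'⟩ := h'
  have hpq : p * q' = p' * q :=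
    IsFractionRing.injective (RR N) (KK N) (by simp only [map_mul, ← hxq, ← hxq']; ring)
  have hE : (ι (evalAt N a0 p) : KK N) * ι (evalAt N a0 q') =
      ι (evalAt N a0 p') * ι (evalAt N a0 q) := by
    simp only [← map_mul, hpq]
  refine mul_right_cancel₀ (mul_ne_zero (algebraMap_ne_zero hq) (algebraMap_ne_zero hq')) ?_
  linear_combination (ι (evalAt N a0 q') : KK N) * hyq - (ι (evalAt N a0 q) : KK N) * hyq' + hE

theorem zero : SubstAt N a0 0 0 :=
  ⟨0, 1, by simp, by simp, by simp⟩

theorem add {x y x' y' : KK N} (h : SubstAt N a0 x y) (h' : SubstAt N a0 x' y') :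
    SubstAt N a0 (x + x') (y + y') := by
  obtain ⟨p, q, hq, hxq, hyq⟩ := h
  obtain ⟨p', q', hq', hxq', hyq'⟩ := h'
  refine ⟨p * q' + p' * q, q * q', by simpa using ⟨hq, hq'⟩, ?_, ?_⟩ <;>
    simp only [map_add, map_mul]
  · linear_combination (ι q' : KK N) * hxq + (ι q : KK N) * hxq'
  · linear_combination (ι (evalAt N a0 q') : KK N) * hyq + (ι (evalAt N a0 q) : KK N) * hyq'

theorem mul {x y x' y' : KK N} (h : SubstAt N a0 x y) (h' : SubstAt N a0 x' y') :
    SubstAt N a0 (x * x') (y * y') := by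
  obtain ⟨p, q, hq, hxq, hyq⟩ := h
  obtain ⟨p', q', hq', hxq', hyq'⟩ := h'
  refine ⟨p * p', q * q', by simpa using ⟨hq, hq'⟩, ?_, ?_⟩ <;> simp only [map_mul]
  · linear_combination (x' * ι q' : KK N) * hxq + (ι p : KK N) * hxq'
  · linear_combination (y' * ι (evalAt N a0 q') : KK N) * hyq + (ι (evalAt N a0 p) : KK N) * hyq'

theorem sum {ι' : Type*} (t : Finset ι') {f g : ι' → KK N}
    (h : ∀ i ∈ t, SubstAt N a0 (f i) (g i)) :
    SubstAt N a0 (∑ i ∈ t, f i) (∑ i ∈ t, g i) := by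
  classical
  induction t using Finset.induction_on with
  | empty => simpa using zero
  | insert i t hi ih =>
    rw [Finset.sum_insert hi, Finset.sum_insert hi]
    exact (h i (t.mem_insert_self i)).add (ih fun j hj => h j (Finset.mem_insert_of_mem hj))

theorem matrix_mul_apply {n : Type*} [Fintype n] {A A' B B' : Matrix n n (KK N)}
    (hA : ∀ i j, SubstAt N a0 (A i j) (A' i j)) (hB : ∀ i j, SubstAt N a0 (B i j) (B' i j))
    (i j : n) : SubstAt N a0 ((A * B) i j) ((A' * B') i j) :=
  sum _ fun k _ => (hA i k).mul (hB k j)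

theorem of_mem_depOn {s : Set ℤ} (hs : 0 ∉ s) {x : KK N} (hx : x ∈ depOn N s) :
    SubstAt N a0 x x := by
  obtain ⟨p, q, hq0, hp, hq, hxq⟩ := mem_depOn_iff.mp hx
  rw [← evalAt_eq_self a0 hs hq] at hq0
  exact ⟨p, q, hq0, hxq, by rwa [evalAt_eq_self a0 hs hp, evalAt_eq_self a0 hs hq]⟩

theorem mem_depOn {s : Set ℤ} {x y : KK N} (h : SubstAt N a0 x y) (hx : x ∈ depOn N s) :
    y ∈ depOn N (s \ {0}) := by
  obtain ⟨p, q, -, hrel, hp, hq, hxq⟩ := exists_isRelPrime_of_mem_depOn hx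
  have ⟨p₀, q₀, hq₀, hxq₀, _⟩ := h
  -- a reduced denominator divides every denominator, so it survives the substitution
  have hdvd : q ∣ q₀ := by
    refine hrel.symm.dvd_of_dvd_mul_right ⟨p₀, IsFractionRing.injective (RR N) (KK N) ?_⟩
    simp only [map_mul, ← hxq, ← hxq₀]
    ring
  have hq' : evalAt N a0 q ≠ 0 := fun h0 => hq₀ (by obtain ⟨c, rfl⟩ := hdvd; simp [h0])
  have hy : SubstAt N a0 x (ι (evalAt N a0 p) / ι (evalAt N a0 q)) :=
    ⟨p, q, hq', hxq, div_mul_cancel₀ _ (algebraMap_ne_zero hq')⟩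
  rw [h.unique hy]
  exact div_mem (algebraMap_mem_depOn (evalAt_mem_supported a0 hp))
    (algebraMap_mem_depOn (evalAt_mem_supported a0 hq))

theorem derivation {D : Derivation ℂ (KK N) (KK N)} {v : Option (Fin N × ℤ)}
    (hD : ∀ p : RR N, D (ι p) = ι (pderiv v p)) (hv : ∀ γ, v ≠ some (γ, 0)) {x y : KK N}
    (h : SubstAt N a0 x y) : SubstAt N a0 (D x) (D y) := by
  obtain ⟨p, q, hq, hxq, hyq⟩ := h
  refine ⟨_, q * q, by simpa using hq, derivation_quotient_rule hD hxq, ?_⟩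
  simpa only [map_mul, map_sub, evalAt_pderiv a0 hv] using derivation_quotient_rule hD hyq

end SubstAt

theorem Sz_gauge_eq {n : Type*} [Fintype n] [DecidableEq n] {Ma : Matrix n n (KK N)}
    (hMa : Ma.det ≠ 0) (M : Matrix n n (KK N)) :
    ((Ma⁻¹).map (Sz N (-1))).map (Sz N 1) * M * ((Ma⁻¹).map (Sz N (-1)))⁻¹ =
      Ma⁻¹ * M * Ma.map (Sz N (-1)) := by
  have hMb : (Ma.map (Sz N (-1))).det ≠ 0 := by
    rw [← RingEquiv.mapMatrix_apply, ← RingEquiv.map_det]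
    exact (map_ne_zero _).mpr hMa
  have hS : (Ma⁻¹.map (Sz N (-1))).map (Sz N 1) = Ma⁻¹ := by
    ext i j
    exact Sz_one_Sz_neg_one _
  rw [hS, Matrix.map_inv_of_field, Matrix.nonsing_inv_nonsing_inv _ hMb.isUnit]

theorem map_derivation_gauge_eq_zero {a0 : Fin N → ℂ}
    {D : Derivation ℂ (KK N) (KK N)} {v : Option (Fin N × ℤ)}
    (hD : ∀ p : RR N, D (ι p) = ι (pderiv v p)) (hv : ∀ γ, v ≠ some (γ, 0))
    {n : Type*} [Fintype n] [DecidableEq n] {M Ma Mb : Matrix n n (KK N)} (hM : M.det ≠ 0)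
    {s : Set ℤ} (hs : 0 ∉ s) (hB : ∀ i j, (M.map D * M⁻¹) i j ∈ depOn N s)
    (hMa : ∀ i j, SubstAt N a0 (M i j) (Ma i j)) (hMa' : Ma.det ≠ 0)
    {t : Set ℤ} (ht : v ∉ depVars N t) (hMb : ∀ i j, Mb i j ∈ depOn N t) :
    (Ma⁻¹ * M * Mb).map D = 0 := by
  have hDM : M.map D = M.map D * M⁻¹ * M := by
    rw [Matrix.mul_assoc, Matrix.nonsing_inv_mul _ hM.isUnit, Matrix.mul_one]
  -- `D M = B M` with `B` free of `u_0`, so substituting `u_0 = a0` gives `D Ma = B Ma`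
  have hDMa : Ma.map D = M.map D * M⁻¹ * Ma := by
    ext i j
    have h := (hMa i j).derivation hD hv
    rw [← Matrix.map_apply (f := D), hDM] at h
    exact h.unique (SubstAt.matrix_mul_apply (fun k l => .of_mem_depOn hs (hB k l)) hMa i j)
  have hDMb : Mb.map D = 0 := by
    ext i j
    exact derivation_eq_zero_of_mem_depOn hD ht (hMb i j)
  rw [Matrix.map_derivation_mul, hDMb, Matrix.mul_zero, add_zero,
    Matrix.map_derivation_inv_mul_eq_zero D hMa'.isUnit hDMa hDM, Matrix.zero_mul]

theorem statement7_general (N d : ℕ)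
    -- the partial derivatives `∂/∂u^i_ℓ`:
    (Pd : Fin N → ℤ → Derivation ℂ (KK N) (KK N))
    (hPdlam : ∀ i ℓ, Pd i ℓ (lam N) = 0)
    (hPdu : ∀ i ℓ γ m, Pd i ℓ (uu N γ m) = if γ = i ∧ m = ℓ then 1 else 0)
    -- `M`, invertible, with entries rational in `u_0, u_1, λ` only:
    (M : Matrix (Fin d) (Fin d) (KK N))
    (hMdep : ∀ p q, M p q ∈ depOn N {0, 1})
    (hMdet : M.det ≠ 0)
    -- the condition:
    (hcond : ∀ i j : Fin N, (M.map ⇑(Pd j 1) * M⁻¹).map ⇑(Pd i 0) = 0)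
    -- the substituted matrix `Ma = M(a_0,u_1,λ)`, well defined and invertible:
    (a0 : Fin N → ℂ) (Ma : Matrix (Fin d) (Fin d) (KK N))
    (hMa : ∀ p q, SubstAt N a0 (M p q) (Ma p q))
    (hMadet : Ma.det ≠ 0) :
    ((Ma⁻¹).map ⇑(Sz N (-1))).map ⇑(Sz N 1) * M * ((Ma⁻¹).map ⇑(Sz N (-1)))⁻¹ =
        Ma⁻¹ * M * Ma.map ⇑(Sz N (-1)) ∧
      ∀ p q, (Ma⁻¹ * M * Ma.map ⇑(Sz N (-1))) p q ∈ depOn N {0} := by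
  have hPd : ∀ i ℓ (p : RR N), Pd i ℓ (ι p) = ι (pderiv (some (i, ℓ)) p) := fun i ℓ =>
    derivation_algebraMap_eq_pderiv (hPdlam i ℓ) (hPdu i ℓ)
  have hMa1 : ∀ i j, Ma i j ∈ depOn N {1} := fun i j =>
    depOn_mono (by simp) ((hMa i j).mem_depOn (hMdep i j))
  have hSMa : ∀ i j, Ma.map (Sz N (-1)) i j ∈ depOn N {0} := fun i j =>
    depOn_mono (by simp) (Sz_neg_one_mem_depOn (hMa1 i j))
  have hB : ∀ k i j, (M.map (Pd k 1) * M⁻¹) i j ∈ depOn N {1} := fun k i j =>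
    depOn_mono (by simp) <| mem_depOn_sdiff_of_derivation_eq_zero (hPd · 0)
      (Matrix.mul_apply_mem _ (fun i j => derivation_mem_depOn (hPd k 1) (hMdep i j))
        (Matrix.inv_apply_mem _ hMdep) i j)
      fun l => congrFun (congrFun (hcond l k) i) j
  refine ⟨Sz_gauge_eq hMadet M, fun i j => ?_⟩
  have hMhat : (Ma⁻¹ * M * Ma.map (Sz N (-1))) i j ∈ depOn N {0, 1} :=
    Matrix.mul_apply_mem _ (Matrix.mul_apply_mem _
      (Matrix.inv_apply_mem _ fun i j => depOn_mono (by simp) (hMa1 i j)) hMdep)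
      (fun i j => depOn_mono (by simp) (hSMa i j)) i j
  refine depOn_mono (by simp) (mem_depOn_sdiff_of_derivation_eq_zero (hPd · 1) hMhat fun k => ?_)
  exact congrFun (congrFun (map_derivation_gauge_eq_zero (hPd k 1) (by simp) hMdet (by simp)
    (hB k) hMa hMadet (by simp [depVars]) hSMa) i) j

/-- Theorem `thmuk1`, matrix part: if the invertible matrix
`M = M(u_0,u_1,λ)` satisfies `∂/∂u^i_0(∂M/∂u^j_1 · M⁻¹) = 0` for all `i, j`,
`Ma = M(a_0,u_1,λ)` is well defined and invertible, and
`g := S⁻¹(Ma⁻¹)`, then `M̂ := S(g)·M·g⁻¹ = Ma⁻¹ · M · S⁻¹(Ma)` has entries that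
are rational functions of `u_0` and `λ` only. -/
theorem statement7 (N d : ℕ) (hN : 0 < N) (hd : 0 < d)
    -- the partial derivatives `∂/∂u^i_ℓ`:
    (Pd : Fin N → ℤ → Derivation ℂ (KK N) (KK N))
    (hPdlam : ∀ i ℓ, Pd i ℓ (lam N) = 0)
    (hPdu : ∀ i ℓ γ m, Pd i ℓ (uu N γ m) = if γ = i ∧ m = ℓ then 1 else 0)
    -- `M`, invertible, with entries rational in `u_0, u_1, λ` only:
    (M : Matrix (Fin d) (Fin d) (KK N))
    (hMdep : ∀ p q, M p q ∈ depOn N {0, 1})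
    (hMdet : M.det ≠ 0)
    -- the condition:
    (hcond : ∀ i j : Fin N, (M.map ⇑(Pd j 1) * M⁻¹).map ⇑(Pd i 0) = 0)
    -- the substituted matrix `Ma = M(a_0,u_1,λ)`, well defined and invertible:
    (a0 : Fin N → ℂ) (Ma : Matrix (Fin d) (Fin d) (KK N))
    (hMa : ∀ p q, SubstAt N a0 (M p q) (Ma p q))
    (hMadet : Ma.det ≠ 0) :
    ((Ma⁻¹).map ⇑(Sz N (-1))).map ⇑(Sz N 1) * M * ((Ma⁻¹).map ⇑(Sz N (-1)))⁻¹ =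
        Ma⁻¹ * M * Ma.map ⇑(Sz N (-1)) ∧
      ∀ p q, (Ma⁻¹ * M * Ma.map ⇑(Sz N (-1))) p q ∈ depOn N {0} :=
  statement7_general N d Pd hPdlam hPdu M hMdep hMdet hcond a0 Ma hMa hMadet
end
end

section
/- Fix c ∈ ℂ. With N = 3, d = 3, variables u^γ_ℓ, and F^1 = c u^2_0 − c u^2_1 + u^1_0 u^2_0 − u^2_1 u^2_0 − u^1_1 u^2_1 + u^2_1 u^2_2 + u^3_0 − u^3_1, F^2 = u^2_0(u^1_{−1} − u^1_0 − u^2_0 + u^2_1), F^3 = u^3_0(u^1_{−1} − u^1_0 + u^2_{−1} − u^2_0), the matrices M̂ = [[0, u^2_0, 0], [u^2_0 − c, λ, 1], [u^3_0 − c u^1_0 + u^2_0 u^1_0, λ u^1_0 − u^2_0 u^1_0 − u^3_0, u^1_0]] and Û = [[u^2_0 − u^1_{−1} − u^2_{−1}, u^2_{−1}, 0], [u^2_0 − c, λ − u^1_{−1}, 1], [u^3_0 − c u^1_{−1} − c u^2_{−1} + c u^2_0 + u^1_0 u^2_0 + u^2_{−1} u^2_0 − u^2_0 u^2_1, λ u^1_{−1}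 + c u^2_{−1} − c u^2_0 − u^1_0 u^2_0 − u^2_{−1} u^2_0 + u^2_0 u^2_1 − u^3_0, 0]] satisfy det(M̂) ≠ 0 and D_t(M̂) = S(Û)·M̂ − M̂·Û, i.e. (M̂, Û) is a matrix Lax representation for this 3-component equation. -/
/-!
Setup: `KK N` is the field of rational functions over `ℂ` in the commuting
variables `λ` (here `lam N`) and `u^γ_ℓ` (here `uu N γ ℓ`, `γ : Fin N`, `ℓ : ℤ`),
realized as the fraction field of the multivariate polynomial ring.
`SS N` is the shift automorphism `S` (fixing `ℂ` and `λ`, sending `u^γ_ℓ` to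
`u^γ_{ℓ+1}`), and `Sz N ℓ = S^ℓ`.
-/

set_option maxHeartbeats 1000000

noncomputable section

open MvPolynomial

/-- The variables `u^γ_ℓ` (`γ = 1,2,3` corresponding to `Fin 3`). -/
def v (γ : Fin 3) (ℓ : ℤ) : KK 3 := uu 3 γ ℓ

/-!
`det M̂ = u²₀ u³₀`, a product of two independent variables. Once `D_t` is expanded on the entries
of `M̂` by the Leibniz rule, and `S` is applied to `Û` by shifting every index, the equation
`D_t(M̂) = S(Û) M̂ - M̂ Û` becomes a polynomial identity in `λ, c` and the `u^γ_ℓ`, so it holds in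
every commutative ring, for every derivation with the prescribed values on `u^γ_0`.
-/

section LaxPair

variable {R : Type*} [CommRing R]

/- In `laxM` and `laxU` the letters `p, q, r` stand for `u¹, u², u³`, `l` for `λ`, and the
subscript is the lattice index, with `ₘ` for `-1`. -/

def laxM (c l p₀ q₀ r₀ : R) : Matrix (Fin 3) (Fin 3) R :=
  !![0, q₀, 0;
     q₀ - c, l, 1;
     r₀ - c * p₀ + q₀ * p₀, l * p₀ - q₀ * p₀ - r₀, p₀]

def laxU (c l pₘ qₘ p₀ q₀ q₁ r₀ : R) : Matrix (Fin 3) (Fin 3) R :=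
  !![q₀ - pₘ - qₘ, qₘ, 0;
     q₀ - c, l - pₘ, 1;
     r₀ - c * pₘ - c * qₘ + c * q₀ + p₀ * q₀ + qₘ * q₀ - q₀ * q₁,
       l * pₘ + c * qₘ - c * q₀ - p₀ * q₀ - qₘ * q₀ + q₀ * q₁ - r₀, 0]

theorem det_laxM (c l p₀ q₀ r₀ : R) : (laxM c l p₀ q₀ r₀).det = q₀ * r₀ := by
  simp only [laxM, Matrix.det_fin_three, Matrix.of_apply, Matrix.cons_val', Matrix.cons_val_zero,
    Matrix.cons_val_one, Matrix.cons_val_fin_one, Matrix.cons_val]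
  ring

theorem laxU_map {S : Type*} [CommRing S] (σ : R →+* S) (c l pₘ qₘ p₀ q₀ q₁ r₀ : R) :
    (laxU c l pₘ qₘ p₀ q₀ q₁ r₀).map σ =
      laxU (σ c) (σ l) (σ pₘ) (σ qₘ) (σ p₀) (σ q₀) (σ q₁) (σ r₀) := by
  ext i j
  fin_cases i <;> fin_cases j <;> simp [laxU]

theorem laxM_map_derivation {A : Type*} [CommSemiring A] [Algebra A R] (D : Derivation A R R)
    {c l pₘ p₀ p₁ qₘ q₀ q₁ q₂ r₀ r₁ : R} (hc : D c = 0) (hl : D l = 0)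
    (hp : D p₀ = c * q₀ - c * q₁ + p₀ * q₀ - q₁ * q₀ - p₁ * q₁ + q₁ * q₂ + r₀ - r₁)
    (hq : D q₀ = q₀ * (pₘ - p₀ - q₀ + q₁))
    (hr : D r₀ = r₀ * (pₘ - p₀ + qₘ - q₀)) :
    (laxM c l p₀ q₀ r₀).map D =
      laxU c l p₀ q₀ p₁ q₁ q₂ r₁ * laxM c l p₀ q₀ r₀ -
        laxM c l p₀ q₀ r₀ * laxU c l pₘ qₘ p₀ q₀ q₁ r₀ := by
  ext i j
  fin_cases i <;> fin_cases j <;>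
    simp only [laxM, laxU, Matrix.map_apply, Matrix.sub_apply, Matrix.mul_apply,
      Fin.sum_univ_three, Matrix.of_apply, Matrix.cons_val', Matrix.cons_val_zero,
      Matrix.cons_val_one, Matrix.cons_val, Matrix.cons_val_fin_one, Fin.zero_eta, Fin.mk_one,
      Fin.reduceFinMk, Fin.isValue, map_add, map_sub, map_zero, Derivation.map_one_eq_zero,
      Derivation.leibniz, smul_eq_mul, hc, hl, hp, hq, hr] <;>
    ring

end LaxPair

theorem SS_uu (N : ℕ) (γ : Fin N) (ℓ : ℤ) : SS N (uu N γ ℓ) = uu N γ (ℓ + 1) := by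
  unfold SS uu
  rw [IsFractionRing.ringEquivOfRingEquiv_algebraMap]
  simp [shiftR, shiftIdx]

theorem SS_lam (N : ℕ) : SS N (lam N) = lam N := by
  rw [SS, lam, IsFractionRing.ringEquivOfRingEquiv_algebraMap]
  simp [shiftR, shiftIdx]

theorem SS_algebraMap (N : ℕ) (a : ℂ) : SS N (algebraMap ℂ (KK N) a) = algebraMap ℂ (KK N) a := by
  rw [SS, IsScalarTower.algebraMap_apply ℂ (RR N) (KK N),
    IsFractionRing.ringEquivOfRingEquiv_algebraMap]
  simp [shiftR, algebraMap_eq]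

theorem Sz_zero (N : ℕ) : Sz N 0 = RingEquiv.refl (KK N) := zpow_zero _

theorem Sz_one (N : ℕ) : Sz N 1 = SS N := zpow_one _

theorem uu_ne_zero (N : ℕ) (γ : Fin N) (ℓ : ℤ) : uu N γ ℓ ≠ 0 :=
  (map_ne_zero_iff _ (IsFractionRing.injective (RR N) (KK N))).mpr (X_ne_zero _)

/-- the pair `(M̂, Û)` below is a matrix Lax representation for
the 3-component equation
`∂ₜ(u¹) = c u²₀ − c u²₁ + u¹₀ u²₀ − u²₁ u²₀ − u¹₁ u²₁ + u²₁ u²₂ + u³₀ − u³₁`,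
`∂ₜ(u²) = u²₀(u¹₋₁ − u¹₀ − u²₀ + u²₁)`,
`∂ₜ(u³) = u³₀(u¹₋₁ − u¹₀ + u²₋₁ − u²₀)`. -/
theorem statement19 (c : ℂ)
    -- the total derivative `D_t` for the right-hand side above:
    (Dt : Derivation ℂ (KK 3) (KK 3)) (hDtlam : Dt (lam 3) = 0)
    (hDtv : ∀ (γ : Fin 3) (ℓ : ℤ),
      Dt (v γ ℓ) = Sz 3 ℓ
        (![algebraMap ℂ (KK 3) c * v 1 0 - algebraMap ℂ (KK 3) c * v 1 1 + v 0 0 * v 1 0 -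
             v 1 1 * v 1 0 - v 0 1 * v 1 1 + v 1 1 * v 1 2 + v 2 0 - v 2 1,
           v 1 0 * (v 0 (-1) - v 0 0 - v 1 0 + v 1 1),
           v 2 0 * (v 0 (-1) - v 0 0 + v 1 (-1) - v 1 0)] γ)) :
    (!![0, v 1 0, 0;
        v 1 0 - algebraMap ℂ (KK 3) c, lam 3, 1;
        v 2 0 - algebraMap ℂ (KK 3) c * v 0 0 + v 1 0 * v 0 0,
          lam 3 * v 0 0 - v 1 0 * v 0 0 - v 2 0, v 0 0] :
        Matrix (Fin 3) (Fin 3) (KK 3)).det ≠ 0 ∧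
    (!![0, v 1 0, 0;
        v 1 0 - algebraMap ℂ (KK 3) c, lam 3, 1;
        v 2 0 - algebraMap ℂ (KK 3) c * v 0 0 + v 1 0 * v 0 0,
          lam 3 * v 0 0 - v 1 0 * v 0 0 - v 2 0, v 0 0] :
        Matrix (Fin 3) (Fin 3) (KK 3)).map ⇑Dt =
      (!![v 1 0 - v 0 (-1) - v 1 (-1), v 1 (-1), 0;
          v 1 0 - algebraMap ℂ (KK 3) c, lam 3 - v 0 (-1), 1;
          v 2 0 - algebraMap ℂ (KK 3) c * v 0 (-1) - algebraMap ℂ (KK 3) c * v 1 (-1) +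
              algebraMap ℂ (KK 3) c * v 1 0 + v 0 0 * v 1 0 + v 1 (-1) * v 1 0 -
              v 1 0 * v 1 1,
            lam 3 * v 0 (-1) + algebraMap ℂ (KK 3) c * v 1 (-1) -
              algebraMap ℂ (KK 3) c * v 1 0 - v 0 0 * v 1 0 - v 1 (-1) * v 1 0 +
              v 1 0 * v 1 1 - v 2 0, 0] :
          Matrix (Fin 3) (Fin 3) (KK 3)).map ⇑(Sz 3 1) *
        !![0, v 1 0, 0;
           v 1 0 - algebraMap ℂ (KK 3) c, lam 3, 1;
           v 2 0 - algebraMap ℂ (KK 3) c * v 0 0 + v 1 0 * v 0 0,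
             lam 3 * v 0 0 - v 1 0 * v 0 0 - v 2 0, v 0 0] -
      !![0, v 1 0, 0;
         v 1 0 - algebraMap ℂ (KK 3) c, lam 3, 1;
         v 2 0 - algebraMap ℂ (KK 3) c * v 0 0 + v 1 0 * v 0 0,
           lam 3 * v 0 0 - v 1 0 * v 0 0 - v 2 0, v 0 0] *
        !![v 1 0 - v 0 (-1) - v 1 (-1), v 1 (-1), 0;
           v 1 0 - algebraMap ℂ (KK 3) c, lam 3 - v 0 (-1), 1;
           v 2 0 - algebraMap ℂ (KK 3) c * v 0 (-1) - algebraMap ℂ (KK 3) c * v 1 (-1) +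
               algebraMap ℂ (KK 3) c * v 1 0 + v 0 0 * v 1 0 + v 1 (-1) * v 1 0 -
               v 1 0 * v 1 1,
             lam 3 * v 0 (-1) + algebraMap ℂ (KK 3) c * v 1 (-1) -
               algebraMap ℂ (KK 3) c * v 1 0 - v 0 0 * v 1 0 - v 1 (-1) * v 1 0 +
               v 1 0 * v 1 1 - v 2 0, 0] := by
  set C := algebraMap ℂ (KK 3) c
  have hM : laxM C (lam 3) (v 0 0) (v 1 0) (v 2 0) = !![0, v 1 0, 0;
      v 1 0 - C, lam 3, 1;
      v 2 0 - C * v 0 0 + v 1 0 * v 0 0, lam 3 * v 0 0 - v 1 0 * v 0 0 - v 2 0, v 0 0] := rfl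
  refine ⟨?_, ?_⟩
  · rw [← hM, det_laxM]
    exact mul_ne_zero (uu_ne_zero 3 1 0) (uu_ne_zero 3 2 0)
  · have hp := hDtv 0 0
    have hq := hDtv 1 0
    have hr := hDtv 2 0
    simp only [Sz_zero, RingEquiv.refl_apply, Matrix.cons_val_zero, Matrix.cons_val_one,
      Matrix.cons_val_two, Matrix.head_cons, Matrix.tail_cons] at hp hq hr
    have hShift : (laxU C (lam 3) (v 0 (-1)) (v 1 (-1)) (v 0 0) (v 1 0) (v 1 1) (v 2 0)).map
        (Sz 3 1) = laxU C (lam 3) (v 0 0) (v 1 0) (v 0 1) (v 1 1) (v 1 2) (v 2 1) := by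
      rw [Sz_one, ← RingEquiv.coe_toRingHom, laxU_map]
      simp only [RingEquiv.coe_toRingHom, v, SS_uu, SS_lam, C, SS_algebraMap]
      norm_num only
    have key := laxM_map_derivation Dt (Dt.map_algebraMap c) hDtlam hp hq hr
    rw [← hShift] at key
    exact key
end
end
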